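/- Let k ≥ 2 and let x ∈ A^ℤ be a sequence with finite k-kernel such that for some m ≥ 1, no residue 0 ≤ j < k^m satisfies x_n = x_{j+k^m n} for all n ∈ ℤ (i.e., x does not occur among its own k^m-arithmetic-progression subsequences). If every element of Ker_k(x) \ {x} is null, then x is null; more precisely, if every z ∈ Ker_k(x)\{x} is s'-null, then x is (k^m+1)·s'·|Ker_k(x)|-null. -/

import Mathlib

/-- The `k`-kernel of a bi-infinite sequence `x`: all subsequences
`(x_{i + k^m n})_{n ∈ ℤ}` with `m ∈ ℕ` and `0 ≤ i < k^m`. -/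
def kerSet {A : Type*} (k : ℕ) (x : ℤ → A) : Set (ℤ → A) :=
  {y | ∃ m : ℕ, ∃ i : ℕ, i < k ^ m ∧ y = fun n => x ((i : ℤ) + (k : ℤ) ^ m * n)}

/-- A sequence `y` is `t`-null if for all distinct letters `a, b` and every `G ⊆ ℤ` of
size `t`, not every `{a,b}`-valued pattern along `G` is realised in some shift of `y`. -/
def IsTNull {A : Type*} (y : ℤ → A) (t : ℕ) : Prop :=
  ∀ a b : A, a ≠ b → ∀ G : Finset ℤ, G.card = t →
    ¬ (∀ u : ℤ → A, (∀ g ∈ G, u g = a ∨ u g = b) →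
        ∃ i : ℤ, ∀ g ∈ G, y (i + g) = u g)

/-- A sequence is null if it is `t`-null for some `t`. -/
def IsNullSeq {A : Type*} (y : ℤ → A) : Prop := ∃ t : ℕ, IsTNull y t

/-!
Split `x` along the residues modulo `k^m`: by hypothesis every decimation `x(c + k^m ·)` is a
kernel element different from `x`, hence `s'`-null. By pigeonhole, a window `G` of the stated
size has a residue class `r + k^m H` with `|H| ≥ s'·|Ker|`. Cut `H` into disjoint blocks of size
`s'`, one per kernel element `z ≠ x`, and put on each block a pattern that `z` misses. If `x`
realised the glued pattern at some shift `i`, then writing `i + r = c + k^m q` the decimation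
`x(c + k^m ·)` would realise it at shift `q`, including on its own block.
-/

section

variable {A : Type*}

/-- `{a, b}^G ⊆ L(y, G)`: every `{a, b}`-pattern on `G` occurs in some shift of `y`. -/
def Shatters (y : ℤ → A) (a b : A) (G : Finset ℤ) : Prop :=
  ∀ u : ℤ → A, (∀ g ∈ G, u g = a ∨ u g = b) → ∃ i : ℤ, ∀ g ∈ G, y (i + g) = u g

theorem Shatters.mono {y : ℤ → A} {a b : A} {G G' : Finset ℤ} (h : Shatters y a b G)
    (hG' : G' ⊆ G) : Shatters y a b G' := by
  classical
  intro u hu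
  obtain ⟨i, hi⟩ := h (fun g => if g ∈ G' then u g else a) fun g _ => by
    split_ifs with hg
    exacts [hu g hg, Or.inl rfl]
  exact ⟨i, fun g hg => by simpa [hg] using hi g (hG' hg)⟩

theorem IsTNull.mono {y : ℤ → A} {t T : ℕ} (h : IsTNull y t) (hle : t ≤ T) : IsTNull y T := by
  intro a b hab G hG hy
  obtain ⟨G', hG', hcard⟩ := Finset.exists_subset_card_eq (hG ▸ hle)
  exact h a b hab G' hcard (Shatters.mono hy hG')

theorem exists_forall_isTNull (S : Finset (ℤ → A)) (hS : ∀ z ∈ S, IsNullSeq z) :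
    ∃ t, ∀ z ∈ S, IsTNull z t := by
  classical
  induction S using Finset.induction_on with
  | empty => exact ⟨0, by simp⟩
  | insert z S _ ih =>
    obtain ⟨t, ht⟩ := ih fun y hy => hS y (Finset.mem_insert_of_mem hy)
    obtain ⟨t', ht'⟩ := hS z (Finset.mem_insert_self z S)
    refine ⟨max t t', fun y hy => ?_⟩
    rcases Finset.mem_insert.1 hy with rfl | hy
    exacts [ht'.mono (le_max_right _ _), (ht y hy).mono (le_max_left _ _)]

theorem exists_pattern_forall_not_realized {a b : A} (hab : a ≠ b) {s : ℕ}
    (S : Finset (ℤ → A)) (hS : ∀ z ∈ S, IsTNull z s) (H : Finset ℤ) (hH : s * S.card ≤ H.card) :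
    ∃ u : ℤ → A, (∀ h ∈ H, u h = a ∨ u h = b) ∧ ∀ z ∈ S, ∀ i : ℤ, ∃ h ∈ H, z (i + h) ≠ u h := by
  classical
  induction S using Finset.induction_on generalizing H with
  | empty => exact ⟨fun _ => a, fun _ _ => Or.inl rfl, by simp⟩
  | insert z S hzS ih =>
    rw [Finset.card_insert_of_notMem hzS, mul_add_one] at hH
    obtain ⟨B, hBH, hB⟩ := Finset.exists_subset_card_eq (le_of_add_le_right hH)
    obtain ⟨u', hu'H, hu'S⟩ := ih (fun y hy => hS y (Finset.mem_insert_of_mem hy)) (H \ B)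
      (by rw [Finset.card_sdiff_of_subset hBH]; omega)
    have hzB := hS z (Finset.mem_insert_self z S) a b hab B hB
    simp only [not_forall, not_exists, exists_prop] at hzB
    obtain ⟨v, hvB, hvz⟩ := hzB
    refine ⟨fun g => if g ∈ B then v g else u' g, fun g hg => ?_, fun y hy i => ?_⟩
    · dsimp only
      split_ifs with hgB
      exacts [hvB g hgB, hu'H g (Finset.mem_sdiff.2 ⟨hg, hgB⟩)]
    rcases Finset.mem_insert.1 hy with rfl | hy
    · obtain ⟨g, hgB, hg⟩ := hvz i
      exact ⟨g, hBH hgB, by simpa [hgB] using hg⟩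
    · obtain ⟨g, hg, hgy⟩ := hu'S y hy i
      exact ⟨g, Finset.sdiff_subset hg, by simpa [(Finset.mem_sdiff.1 hg).2] using hgy⟩

theorem Shatters.exists_subseq_realizes {x : ℤ → A} {a b : A} {p : ℕ} (hp : 0 < p) {r : ℤ}
    {F : Finset ℤ} (hF : ∀ g ∈ F, g % p = r) (hx : Shatters x a b F) (u : ℤ → A)
    (hu : ∀ h ∈ F.image (· / (p : ℤ)), u h = a ∨ u h = b) :
    ∃ c : ℕ, c < p ∧ ∃ q : ℤ, ∀ h ∈ F.image (· / (p : ℤ)), x (c + p * (q + h)) = u h := by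
  obtain ⟨i, hi⟩ := hx (fun g => u (g / p)) fun g hg => hu _ (Finset.mem_image_of_mem _ hg)
  have hp' : (0 : ℤ) < p := by exact_mod_cast hp
  have hc₀ := Int.emod_nonneg (i + r) hp'.ne'
  have hc₁ := Int.emod_lt_of_pos (i + r) hp'
  refine ⟨((i + r) % p).toNat, by omega, (i + r) / p, ?_⟩
  rintro _ hh
  obtain ⟨g, hg, rfl⟩ := Finset.mem_image.1 hh
  rw [← hi g hg, Int.toNat_of_nonneg hc₀]
  congr 1
  linear_combination Int.emod_add_mul_ediv (i + r) p + Int.emod_add_mul_ediv g p - hF g hg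

theorem isTNull_of_forall_subseq_mem {x : ℤ → A} {p : ℕ} (hp : 0 < p) {s : ℕ}
    (S : Finset (ℤ → A)) (hS : ∀ z ∈ S, IsTNull z s)
    (hxS : ∀ c : ℕ, c < p → (fun n : ℤ => x (c + p * n)) ∈ S) :
    IsTNull x (p * (s * S.card)) := by
  classical
  intro a b hab G hG hx
  have hp' : (0 : ℤ) < p := by exact_mod_cast hp
  obtain ⟨r, -, hr⟩ := Finset.exists_le_card_fiber_of_mul_le_card_of_maps_to
    (s := G) (f := (· % (p : ℤ))) (t := Finset.Ico 0 (p : ℤ)) (n := s * S.card)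
    (fun g _ => Finset.mem_Ico.2 ⟨Int.emod_nonneg g hp'.ne', Int.emod_lt_of_pos g hp'⟩)
    ⟨0, Finset.mem_Ico.2 ⟨le_rfl, hp'⟩⟩ (by simp [hG])
  set F := G.filter (· % (p : ℤ) = r)
  have hF : ∀ g ∈ F, g % p = r := fun g hg => (Finset.mem_filter.1 hg).2
  have hFcard : (F.image (· / (p : ℤ))).card = F.card := by
    refine Finset.card_image_of_injOn fun g hg g' hg' hgg' => ?_
    linear_combination (Int.emod_add_mul_ediv g p).symm + Int.emod_add_mul_ediv g' p + hF g hg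
      - hF g' hg' + (p : ℤ) * hgg'
  obtain ⟨u, hu, hu_missed⟩ := exists_pattern_forall_not_realized hab S hS _ (hFcard ▸ hr)
  obtain ⟨c, hc, q, hq⟩ := (Shatters.mono hx (Finset.filter_subset _ G)).exists_subseq_realizes
    hp hF u hu
  obtain ⟨h, hh, hne⟩ := hu_missed _ (hxS c hc) q
  exact hne (hq h hh)

end

theorem stmt12_general {A : Type*} (k : ℕ) (hk : 2 ≤ k) (x : ℤ → A)
    (hker : (kerSet k x).Finite)
    (m : ℕ)
    (hno : ¬ ∃ j : ℕ, j < k ^ m ∧ ∀ n : ℤ, x n = x ((j : ℤ) + (k : ℤ) ^ m * n)) :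
    ((∀ z ∈ kerSet k x, z ≠ x → IsNullSeq z) → IsNullSeq x) ∧
    (∀ s' : ℕ, (∀ z ∈ kerSet k x, z ≠ x → IsTNull z s') →
      IsTNull x ((k ^ m + 1) * s' * hker.toFinset.card)) := by
  classical
  set S := hker.toFinset.erase x
  have hmemS : ∀ z, z ∈ S ↔ z ≠ x ∧ z ∈ kerSet k x := by simp [S]
  have hxS : ∀ c : ℕ, c < k ^ m → (fun n : ℤ => x (c + (k ^ m : ℕ) * n)) ∈ S := by
    refine fun c hc => (hmemS _).2 ⟨fun h => hno ⟨c, hc, fun n => ?_⟩, m, c, hc, by simp⟩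
    simpa using (congrFun h n).symm
  have key : ∀ s', (∀ z ∈ kerSet k x, z ≠ x → IsTNull z s') →
      IsTNull x ((k ^ m + 1) * s' * hker.toFinset.card) := fun s' hs' =>
    (isTNull_of_forall_subseq_mem (pow_pos (by omega) m) S
      (fun z hz => hs' z ((hmemS z).1 hz).2 ((hmemS z).1 hz).1) hxS).mono <| by
      have := Finset.card_erase_le (s := hker.toFinset) (a := x)
      calc k ^ m * (s' * S.card) ≤ k ^ m * (s' * hker.toFinset.card) := by gcongr
        _ ≤ (k ^ m + 1) * s' * hker.toFinset.card := by nlinarith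
  refine ⟨fun hnull => ?_, key⟩
  obtain ⟨t, ht⟩ :=
    exists_forall_isTNull S fun z hz => hnull z ((hmemS z).1 hz).2 ((hmemS z).1 hz).1
  exact ⟨_, key t fun z hz hzx => ht z ((hmemS z).2 ⟨hzx, hz⟩)⟩

/-- Let `k ≥ 2` and let `x ∈ A^ℤ` have finite `k`-kernel, and suppose
that for some `m ≥ 1` no residue `0 ≤ j < k^m` satisfies `x_n = x_{j + k^m n}` for all
`n ∈ ℤ`.  If every element of `Ker_k(x) \ {x}` is null then `x` is null; more precisely,
if every `z ∈ Ker_k(x) \ {x}` is `s'`-null, then `x` is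
`(k^m + 1)·s'·|Ker_k(x)|`-null. -/
theorem stmt12 {A : Type*} [Fintype A] (k : ℕ) (hk : 2 ≤ k) (x : ℤ → A)
    (hker : (kerSet k x).Finite)
    (m : ℕ) (hm : 1 ≤ m)
    (hno : ¬ ∃ j : ℕ, j < k ^ m ∧ ∀ n : ℤ, x n = x ((j : ℤ) + (k : ℤ) ^ m * n)) :
    ((∀ z ∈ kerSet k x, z ≠ x → IsNullSeq z) → IsNullSeq x) ∧
    (∀ s' : ℕ, (∀ z ∈ kerSet k x, z ≠ x → IsTNull z s') →
      IsTNull x ((k ^ m + 1) * s' * hker.toFinset.card)) :=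
  stmt12_general k hk x hker m hno
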